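/- Let σ be a finite type and let f ∈ MvPowerSeries σ ℤ[t] have constant coefficient 1, with product-form exponent family m. Write P_λ ∈ ℤ[t] for the coefficient of X^λ in f, and for a positive integer k let P_λ(t^k) denote the composition of the polynomial P_λ with t^k. Then for every nonzero exponent vector d: ∑_{(k,κ) : d = k·κ} ht(κ) · (∑_{n≥0} m(κ,n) t^{kn}) = ∑ (−1)^r · ht(λ₁) · ∏_{i=1}^r P_{λᵢ}, where the left sum is over pairs of a positive integer k and a nonzero exponent vector κ with d = k·κ, and the right sum is over all nonempty lists (λ₁, …, λ_r) of nonzero exponent vectors with λ₁ + ⋯ + λ_r = d. -/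

import Mathlib

/-!
Let `g = ∏_{0 ≠ λ ≤ d} ∏ₙ (1 - tⁿ X^λ)^{m(λ,n)}`. It agrees with `f` in every exponent `μ ≤ d`:
the factors of `g` that do not occur in the product for `μ` have `λ ≰ μ`, so they are `≡ 1`
modulo the ideal of series whose coefficients vanish at all exponents `≤ μ`.

The coefficient of `X^d` in the logarithmic Euler derivative `D(g)/g` is then computed in two
ways. Since `D(g)/g` is additive over the factors and
`D(1 - c X^λ)/(1 - c X^λ) = -ht(λ) ∑_{k ≥ 1} c^k X^{kλ}`, it is minus the left-hand side.
Expanding `g⁻¹` as the signed sum of `∏ P_{λᵢ}` over compositions `(λ₁, …, λ_r)` and splitting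
off the first part of each composition shows that it is minus the right-hand side.
-/

/-- Integer powers of a multivariate power series whose constant coefficient is `1`:
nonnegative powers are ordinary powers, negative powers are powers of the inverse
`MvPowerSeries.invOfUnit f 1`. -/
noncomputable def zpowSeries {σ : Type*} {R : Type*} [CommRing R]
    (f : MvPowerSeries σ R) (n : ℤ) : MvPowerSeries σ R :=
  if 0 ≤ n then f ^ n.toNat else (MvPowerSeries.invOfUnit f 1) ^ (-n).toNat

/-- The height of an exponent vector: its total degree `∑ᵢ d i`. -/
def htv {σ : Type*} (d : σ →₀ ℕ) : ℕ := d.sum fun _ n => n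

open MvPowerSeries

section Degree

variable {σ : Type*}

lemma htv_add (a b : σ →₀ ℕ) : htv (a + b) = htv a + htv b := map_add Finsupp.degree a b

lemma htv_zero : htv (0 : σ →₀ ℕ) = 0 := map_zero (Finsupp.degree (σ := σ))

lemma htv_nsmul (k : ℕ) (a : σ →₀ ℕ) : htv (k • a) = k * htv a := map_nsmul Finsupp.degree k a

lemma htv_pos {a : σ →₀ ℕ} (ha : a ≠ 0) : 0 < htv a :=
  Nat.pos_of_ne_zero fun h => ha ((Finsupp.degree_eq_zero_iff a).1 h)

lemma nsmul_left_injective_of_ne_zero {a : σ →₀ ℕ} (ha : a ≠ 0) :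
    Function.Injective fun k : ℕ => k • a := fun j k hjk => by
  have := congrArg htv hjk
  simp only [htv_nsmul] at this
  exact Nat.eq_of_mul_eq_mul_right (htv_pos ha) this

lemma tsub_lt_self_of_ne_zero {a μ : σ →₀ ℕ} (h : a ≤ μ) (ha : a ≠ 0) : μ - a < μ := by
  refine lt_of_le_of_ne tsub_le_self fun he => ha ?_
  have := tsub_add_cancel_of_le h
  rw [he] at this
  exact add_eq_left.1 this

end Degree

section EulerDeriv

variable {σ R : Type*} [CommRing R]

/-- The Euler operator `∑ᵢ Xᵢ ∂/∂Xᵢ`, the paper's `D`. -/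
noncomputable def eulerDeriv : MvPowerSeries σ R →ₗ[R] MvPowerSeries σ R where
  toFun f d := (htv d : R) * coeff d f
  map_add' f g := by ext d; exact mul_add _ _ _
  map_smul' r f := by ext d; exact mul_left_comm _ _ _

lemma coeff_eulerDeriv (f : MvPowerSeries σ R) (d : σ →₀ ℕ) :
    coeff d (eulerDeriv f) = (htv d : R) * coeff d f := rfl

lemma eulerDeriv_monomial (a : σ →₀ ℕ) (c : R) :
    eulerDeriv (monomial a c) = monomial a ((htv a : R) * c) := by
  classical
  ext d
  rw [coeff_eulerDeriv, coeff_monomial, coeff_monomial]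
  split_ifs with h
  · rw [h]
  · rw [mul_zero]

lemma eulerDeriv_one : eulerDeriv (1 : MvPowerSeries σ R) = 0 := by
  simpa [htv_zero] using eulerDeriv_monomial (R := R) (0 : σ →₀ ℕ) 1

lemma eulerDeriv_mul (f g : MvPowerSeries σ R) :
    eulerDeriv (f * g) = eulerDeriv f * g + f * eulerDeriv g := by
  classical
  ext d
  rw [map_add, coeff_eulerDeriv, coeff_mul, coeff_mul, coeff_mul, Finset.mul_sum,
    ← Finset.sum_add_distrib]
  refine Finset.sum_congr rfl fun p hp => ?_
  rw [coeff_eulerDeriv, coeff_eulerDeriv, ← Finset.HasAntidiagonal.mem_antidiagonal.1 hp, htv_add]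
  push_cast
  ring

end EulerDeriv

section LogDeriv

variable {σ R : Type*} [CommRing R]

lemma mul_invOfUnit_one {f : MvPowerSeries σ R} (hf : constantCoeff f = 1) :
    f * invOfUnit f 1 = 1 :=
  mul_invOfUnit f 1 (by rw [hf, Units.val_one])

lemma invOfUnit_one_eq_of_mul_eq_one {f g : MvPowerSeries σ R} (hf : constantCoeff f = 1)
    (h : f * g = 1) : invOfUnit f 1 = g :=
  left_inv_eq_right_inv (by rw [mul_comm, mul_invOfUnit_one hf]) h

@[simp] lemma constantCoeff_invOfUnit_one (f : MvPowerSeries σ R) :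
    constantCoeff (invOfUnit f 1) = 1 := by
  rw [constantCoeff_invOfUnit, inv_one, Units.val_one]

lemma constantCoeff_zpowSeries {f : MvPowerSeries σ R} (hf : constantCoeff f = 1) (n : ℤ) :
    constantCoeff (zpowSeries f n) = 1 := by
  unfold zpowSeries
  split_ifs <;> simp [hf]

noncomputable def eulerLogDeriv (f : MvPowerSeries σ R) : MvPowerSeries σ R :=
  eulerDeriv f * invOfUnit f 1

lemma eulerLogDeriv_one : eulerLogDeriv (1 : MvPowerSeries σ R) = 0 := by
  rw [eulerLogDeriv, eulerDeriv_one, zero_mul]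

lemma eulerLogDeriv_mul {f g : MvPowerSeries σ R} (hf : constantCoeff f = 1)
    (hg : constantCoeff g = 1) : eulerLogDeriv (f * g) = eulerLogDeriv f + eulerLogDeriv g := by
  have hinv : invOfUnit (f * g) 1 = invOfUnit f 1 * invOfUnit g 1 :=
    invOfUnit_one_eq_of_mul_eq_one (by rw [map_mul, hf, hg, one_mul]) (by
      rw [mul_mul_mul_comm, mul_invOfUnit_one hf, mul_invOfUnit_one hg, one_mul])
  rw [eulerLogDeriv, eulerLogDeriv, eulerLogDeriv, eulerDeriv_mul, hinv]
  linear_combination (eulerDeriv f * invOfUnit f 1) * mul_invOfUnit_one hg +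
    (eulerDeriv g * invOfUnit g 1) * mul_invOfUnit_one hf

lemma eulerLogDeriv_pow {f : MvPowerSeries σ R} (hf : constantCoeff f = 1) (n : ℕ) :
    eulerLogDeriv (f ^ n) = n • eulerLogDeriv f := by
  induction n with
  | zero => rw [pow_zero, eulerLogDeriv_one, zero_smul]
  | succ n ih =>
    rw [pow_succ, eulerLogDeriv_mul (by rw [map_pow, hf, one_pow]) hf, ih, succ_nsmul]

lemma eulerLogDeriv_invOfUnit_one {f : MvPowerSeries σ R} (hf : constantCoeff f = 1) :
    eulerLogDeriv (invOfUnit f 1) = -eulerLogDeriv f := by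
  have h := eulerLogDeriv_mul hf (constantCoeff_invOfUnit_one f)
  rw [mul_invOfUnit_one hf, eulerLogDeriv_one] at h
  linear_combination -h

lemma eulerLogDeriv_zpowSeries {f : MvPowerSeries σ R} (hf : constantCoeff f = 1) (n : ℤ) :
    eulerLogDeriv (zpowSeries f n) = n • eulerLogDeriv f := by
  unfold zpowSeries
  split_ifs with hn
  · rw [eulerLogDeriv_pow hf, ← natCast_zsmul, Int.toNat_of_nonneg hn]
  · rw [eulerLogDeriv_pow (constantCoeff_invOfUnit_one f), eulerLogDeriv_invOfUnit_one hf,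
      smul_neg, ← natCast_zsmul, ← neg_zsmul, Int.toNat_of_nonneg (by omega), neg_neg]

lemma eulerLogDeriv_prod {ι : Type*} (s : Finset ι) {F : ι → MvPowerSeries σ R}
    (hF : ∀ i ∈ s, constantCoeff (F i) = 1) :
    eulerLogDeriv (∏ i ∈ s, F i) = ∑ i ∈ s, eulerLogDeriv (F i) := by
  classical
  induction s using Finset.induction_on with
  | empty => rw [Finset.prod_empty, Finset.sum_empty, eulerLogDeriv_one]
  | insert i s hi ih =>
    have hs : ∀ j ∈ s, constantCoeff (F j) = 1 := fun j hj => hF j (Finset.mem_insert_of_mem hj)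
    rw [Finset.prod_insert hi, Finset.sum_insert hi,
      eulerLogDeriv_mul (hF i (Finset.mem_insert_self i s))
        (by rw [map_prod]; exact Finset.prod_eq_one hs), ih hs]

end LogDeriv

section OneSubMonomial

variable {σ R : Type*} [CommRing R] {a : σ →₀ ℕ}

lemma constantCoeff_one_sub_monomial (ha : a ≠ 0) (c : R) :
    constantCoeff (1 - monomial a c) = 1 := by
  classical
  rw [map_sub, map_one, ← coeff_zero_eq_constantCoeff_apply, coeff_monomial, if_neg ha.symm,
    sub_zero]

lemma invOfUnit_one_sub_monomial_eq (ha : a ≠ 0) (c : R) :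
    invOfUnit (1 - monomial a c) 1 = 1 + monomial a c * invOfUnit (1 - monomial a c) 1 := by
  linear_combination mul_invOfUnit_one (constantCoeff_one_sub_monomial ha c)

lemma coeff_nsmul_invOfUnit_one_sub_monomial (ha : a ≠ 0) (c : R) (k : ℕ) :
    coeff (k • a) (invOfUnit (1 - monomial a c) 1) = c ^ k := by
  classical
  induction k with
  | zero => simp
  | succ k ih =>
    rw [invOfUnit_one_sub_monomial_eq ha, map_add, coeff_one, coeff_monomial_mul, succ_nsmul,
      if_neg fun h => ha (add_eq_zero.1 h).2, if_pos le_add_self, add_tsub_cancel_right, ih,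
      pow_succ, zero_add, mul_comm]

lemma coeff_invOfUnit_one_sub_monomial_eq_zero (ha : a ≠ 0) (c : R) {μ : σ →₀ ℕ}
    (hμ : ∀ k : ℕ, μ ≠ k • a) : coeff μ (invOfUnit (1 - monomial a c) 1) = 0 := by
  classical
  induction μ using WellFoundedLT.induction with
  | _ μ ih =>
    rw [invOfUnit_one_sub_monomial_eq ha, map_add, coeff_one, coeff_monomial_mul,
      if_neg (by simpa using hμ 0)]
    split_ifs with h
    · rw [ih (μ - a) (tsub_lt_self_of_ne_zero h ha) fun k hk => hμ (k + 1) (by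
        rw [succ_nsmul, ← hk, tsub_add_cancel_of_le h]), mul_zero, zero_add]
    · rw [zero_add]

lemma eulerLogDeriv_one_sub_monomial (c : R) :
    eulerLogDeriv (1 - monomial a c) =
      monomial a (-(htv a : R) * c) * invOfUnit (1 - monomial a c) 1 := by
  rw [eulerLogDeriv, map_sub, eulerDeriv_one, eulerDeriv_monomial, zero_sub, ← map_neg,
    neg_mul]

lemma coeff_nsmul_eulerLogDeriv_one_sub_monomial (ha : a ≠ 0) (c : R) {k : ℕ} (hk : 0 < k) :
    coeff (k • a) (eulerLogDeriv (1 - monomial a c)) = -(htv a : R) * c ^ k := by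
  obtain ⟨j, rfl⟩ : ∃ j, k = j + 1 := ⟨k - 1, by omega⟩
  rw [eulerLogDeriv_one_sub_monomial, coeff_monomial_mul, succ_nsmul, if_pos le_add_self,
    add_tsub_cancel_right, coeff_nsmul_invOfUnit_one_sub_monomial ha, pow_succ']
  ring

lemma coeff_eulerLogDeriv_one_sub_monomial_eq_zero (ha : a ≠ 0) (c : R) {μ : σ →₀ ℕ}
    (hμ : ∀ k : ℕ, 0 < k → μ ≠ k • a) : coeff μ (eulerLogDeriv (1 - monomial a c)) = 0 := by
  rw [eulerLogDeriv_one_sub_monomial, coeff_monomial_mul]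
  split_ifs with h
  · rw [coeff_invOfUnit_one_sub_monomial_eq_zero ha c fun k hk => hμ (k + 1) k.succ_pos (by
      rw [succ_nsmul, ← hk, tsub_add_cancel_of_le h]), mul_zero]
  · rfl

variable {ι : Type*} (s : Finset ι) (c : ι → R) (e : ι → ℤ)

lemma constantCoeff_prod_zpowSeries_one_sub_monomial (ha : a ≠ 0) :
    constantCoeff (∏ i ∈ s, zpowSeries (1 - monomial a (c i)) (e i)) = 1 := by
  rw [map_prod]
  exact Finset.prod_eq_one fun i _ =>
    constantCoeff_zpowSeries (constantCoeff_one_sub_monomial ha (c i)) (e i)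

lemma eulerLogDeriv_prod_zpowSeries_one_sub_monomial (ha : a ≠ 0) :
    eulerLogDeriv (∏ i ∈ s, zpowSeries (1 - monomial a (c i)) (e i)) =
      ∑ i ∈ s, e i • eulerLogDeriv (1 - monomial a (c i)) := by
  rw [eulerLogDeriv_prod s fun i _ =>
    constantCoeff_zpowSeries (constantCoeff_one_sub_monomial ha (c i)) (e i)]
  exact Finset.sum_congr rfl fun i _ =>
    eulerLogDeriv_zpowSeries (constantCoeff_one_sub_monomial ha (c i)) (e i)

lemma coeff_nsmul_eulerLogDeriv_prod_zpowSeries (ha : a ≠ 0) {k : ℕ} (hk : 0 < k) :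
    coeff (k • a) (eulerLogDeriv (∏ i ∈ s, zpowSeries (1 - monomial a (c i)) (e i))) =
      -((htv a : R) * ∑ i ∈ s, e i • c i ^ k) := by
  rw [eulerLogDeriv_prod_zpowSeries_one_sub_monomial s c e ha, map_sum, Finset.mul_sum,
    ← Finset.sum_neg_distrib]
  refine Finset.sum_congr rfl fun i _ => ?_
  rw [map_zsmul, coeff_nsmul_eulerLogDeriv_one_sub_monomial ha _ hk, mul_smul_comm, neg_mul,
    smul_neg]

lemma coeff_eulerLogDeriv_prod_zpowSeries_eq_zero (ha : a ≠ 0) {μ : σ →₀ ℕ}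
    (hμ : ∀ k : ℕ, 0 < k → μ ≠ k • a) :
    coeff μ (eulerLogDeriv (∏ i ∈ s, zpowSeries (1 - monomial a (c i)) (e i))) = 0 := by
  rw [eulerLogDeriv_prod_zpowSeries_one_sub_monomial s c e ha, map_sum]
  exact Finset.sum_eq_zero fun i _ => by
    rw [map_zsmul, coeff_eulerLogDeriv_one_sub_monomial_eq_zero ha _ hμ, smul_zero]

end OneSubMonomial

section VanishingUpTo

variable {σ R : Type*} [CommRing R]

def vanishingUpTo (μ : σ →₀ ℕ) : Ideal (MvPowerSeries σ R) where
  carrier := {h | ∀ ν ≤ μ, coeff ν h = 0}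
  add_mem' hf hg ν hν := by rw [map_add, hf ν hν, hg ν hν, add_zero]
  zero_mem' ν _ := map_zero _
  smul_mem' f h hh ν hν := by
    classical
    rw [smul_eq_mul, coeff_mul]
    refine Finset.sum_eq_zero fun p hp => ?_
    have hp2 : p.2 ≤ ν := by
      rw [← Finset.HasAntidiagonal.mem_antidiagonal.1 hp]
      exact le_add_self
    rw [hh p.2 (hp2.trans hν), mul_zero]

lemma coeff_eq_of_mk_vanishingUpTo_eq {μ : σ →₀ ℕ} {f g : MvPowerSeries σ R}
    (h : Ideal.Quotient.mk (vanishingUpTo μ) f = Ideal.Quotient.mk (vanishingUpTo μ) g) :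
    coeff μ f = coeff μ g :=
  sub_eq_zero.1 (by rw [← map_sub]; exact Ideal.Quotient.eq.1 h μ le_rfl)

lemma monomial_mem_vanishingUpTo {a μ : σ →₀ ℕ} (h : ¬a ≤ μ) (c : R) :
    monomial a c ∈ vanishingUpTo μ := fun ν hν => by
  classical
  rw [coeff_monomial, if_neg fun hνa : ν = a => h (hνa ▸ hν)]

lemma mk_zpowSeries_eq_one {I : Ideal (MvPowerSeries σ R)}
    {u : MvPowerSeries σ R} (hu : constantCoeff u = 1) (h : Ideal.Quotient.mk I u = 1) (n : ℤ) :
    Ideal.Quotient.mk I (zpowSeries u n) = 1 := by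
  have hinv : Ideal.Quotient.mk I (invOfUnit u 1) = 1 := by
    simpa [h] using congrArg (Ideal.Quotient.mk I) (mul_invOfUnit_one hu)
  unfold zpowSeries
  split_ifs
  · rw [map_pow, h, one_pow]
  · rw [map_pow, hinv, one_pow]

lemma mk_vanishingUpTo_prod_zpowSeries_one_sub_monomial {a μ : σ →₀ ℕ} (h : ¬a ≤ μ)
    {ι : Type*} (s : Finset ι) (c : ι → R) (e : ι → ℤ) :
    Ideal.Quotient.mk (vanishingUpTo μ) (∏ i ∈ s, zpowSeries (1 - monomial a (c i)) (e i)) = 1 := by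
  have ha : a ≠ 0 := by rintro rfl; exact h bot_le
  rw [map_prod]
  refine Finset.prod_eq_one fun i _ => mk_zpowSeries_eq_one
    (constantCoeff_one_sub_monomial ha (c i)) ?_ (e i)
  rw [map_sub, map_one, Ideal.Quotient.eq_zero_iff_mem.2 (monomial_mem_vanishingUpTo h _),
    sub_zero]

lemma coeff_prod_eq_of_subset {ι : Type*} [DecidableEq ι] {T T' : Finset ι} (hT : T ⊆ T')
    {μ : σ →₀ ℕ} {F : ι → MvPowerSeries σ R}
    (hF : ∀ i ∈ T' \ T, Ideal.Quotient.mk (vanishingUpTo μ) (F i) = 1) :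
    coeff μ (∏ i ∈ T', F i) = coeff μ (∏ i ∈ T, F i) := by
  refine coeff_eq_of_mk_vanishingUpTo_eq ?_
  rw [← Finset.prod_sdiff hT, map_mul, map_prod, Finset.prod_eq_one hF, one_mul]

open Classical in
lemma coeff_prod_Iic_erase_zero_of_le {d μ : σ →₀ ℕ} (hμ : μ ≤ d) {ι : Type*}
    (s : (σ →₀ ℕ) → Finset ι) (c : (σ →₀ ℕ) → ι → R) (e : (σ →₀ ℕ) → ι → ℤ) :
    coeff μ (∏ a ∈ (Finset.Iic d).erase 0, ∏ i ∈ s a, zpowSeries (1 - monomial a (c a i)) (e a i)) =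
      coeff μ (∏ a ∈ (Finset.Iic μ).erase 0, ∏ i ∈ s a,
        zpowSeries (1 - monomial a (c a i)) (e a i)) := by
  have hIic (ν a : σ →₀ ℕ) : a ∈ (Finset.Iic ν).erase 0 ↔ a ≠ 0 ∧ a ≤ ν := by simp
  refine coeff_prod_eq_of_subset (fun a ha => (hIic d a).2 (((hIic μ a).1 ha).imp_right
    (·.trans hμ))) fun a ha => ?_
  rw [Finset.mem_sdiff, hIic, hIic] at ha
  exact mk_vanishingUpTo_prod_zpowSeries_one_sub_monomial (fun haμ => ha.2 ⟨ha.1.1, haμ⟩) _ _ _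

end VanishingUpTo

section Compositions

variable {σ : Type*}

lemma length_le_htv_sum {l : List (σ →₀ ℕ)} (hl : ∀ x ∈ l, x ≠ 0) : l.length ≤ htv l.sum := by
  induction l with
  | nil => exact le_rfl
  | cons a t ih =>
    rw [List.sum_cons, htv_add, List.length_cons]
    have := htv_pos (hl a List.mem_cons_self)
    have := ih fun x hx => hl x (List.mem_cons_of_mem a hx)
    omega

lemma finite_setOf_compositions (μ : σ →₀ ℕ) :
    {l : List (σ →₀ ℕ) | (∀ x ∈ l, x ≠ 0) ∧ l.sum = μ}.Finite := by
  classical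
  refine ((List.finite_length_le (Finset.Iic μ) (htv μ)).image (List.map Subtype.val)).subset ?_
  rintro l ⟨hl0, hl⟩
  have hmem : ∀ x ∈ l, x ∈ Finset.Iic μ := fun x hx => Finset.mem_Iic.2 (hl ▸ List.le_sum_of_mem hx)
  lift l to List (Finset.Iic μ) using hmem
  refine ⟨l, ?_, rfl⟩
  simpa [← hl] using length_le_htv_sum hl0

noncomputable def compositions (μ : σ →₀ ℕ) : Finset (List (σ →₀ ℕ)) :=
  (finite_setOf_compositions μ).toFinset

lemma mem_compositions {μ : σ →₀ ℕ} {l : List (σ →₀ ℕ)} :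
    l ∈ compositions μ ↔ (∀ x ∈ l, x ≠ 0) ∧ l.sum = μ :=
  Set.Finite.mem_toFinset _

lemma compositions_zero : compositions (0 : σ →₀ ℕ) = {[]} := by
  ext l
  rw [mem_compositions, Finset.mem_singleton]
  refine ⟨fun ⟨hl0, hl⟩ => List.eq_nil_iff_forall_not_mem.2 fun x hx => hl0 x hx ?_, ?_⟩
  · exact le_zero_iff.1 (hl ▸ List.le_sum_of_mem hx)
  · rintro rfl
    exact ⟨fun _ => False.elim ∘ List.not_mem_nil, rfl⟩

lemma sum_compositions_eq_sum_antidiagonal [DecidableEq σ] {M : Type*} [AddCommMonoid M]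
    {μ : σ →₀ ℕ} (hμ : μ ≠ 0) (W : List (σ →₀ ℕ) → M) :
    ∑ l ∈ compositions μ, W l =
      ∑ p ∈ Finset.HasAntidiagonal.antidiagonal μ with p.1 ≠ 0,
        ∑ t ∈ compositions p.2, W (p.1 :: t) := by
  rw [Finset.sum_sigma']
  refine Finset.sum_nbij' (fun l => ⟨(l.headI, l.tail.sum), l.tail⟩) (fun x => x.1.1 :: x.2)
    ?_ ?_ ?_ ?_ ?_
  · rintro (_ | ⟨a, t⟩) hl <;> rw [mem_compositions] at hl
    · exact absurd hl.2.symm hμ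
    · simp only [Finset.mem_sigma, Finset.mem_filter, Finset.HasAntidiagonal.mem_antidiagonal,
        mem_compositions, List.headI, List.tail_cons]
      exact ⟨⟨by rw [← hl.2, List.sum_cons], hl.1 a List.mem_cons_self⟩,
        fun x hx => hl.1 x (List.mem_cons_of_mem a hx), trivial⟩
  · rintro ⟨⟨a, b⟩, t⟩ hx
    simp only [Finset.mem_sigma, Finset.mem_filter, Finset.HasAntidiagonal.mem_antidiagonal,
      mem_compositions] at hx
    obtain ⟨⟨rfl, ha⟩, ht0, rfl⟩ := hx
    rw [mem_compositions]
    exact ⟨List.forall_mem_cons.2 ⟨ha, ht0⟩, List.sum_cons⟩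
  · rintro (_ | ⟨a, t⟩) hl
    · exact absurd (mem_compositions.1 hl).2.symm hμ
    · rfl
  · rintro ⟨⟨a, b⟩, t⟩ hx
    simp only [Finset.mem_sigma, mem_compositions] at hx
    rw [← hx.2.2]
    rfl
  · rintro (_ | ⟨a, t⟩) hl
    · exact absurd (mem_compositions.1 hl).2.symm hμ
    · rfl

lemma setOf_ne_nil_eq_compositions {μ : σ →₀ ℕ} (hμ : μ ≠ 0) :
    {l : List (σ →₀ ℕ) | l ≠ [] ∧ (∀ x ∈ l, x ≠ 0) ∧ l.sum = μ} = compositions μ := by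
  ext l
  rw [Finset.mem_coe, mem_compositions, Set.mem_ofPred_eq, and_iff_right_of_imp fun hl => ?_]
  rintro rfl
  exact hμ hl.2.symm

end Compositions

section InverseByCompositions

variable {σ R : Type*} [CommRing R] [DecidableEq σ]

lemma coeff_invOfUnit_one_eq_sum_compositions {g : MvPowerSeries σ R}
    (hg : constantCoeff g = 1) (μ : σ →₀ ℕ) :
    coeff μ (invOfUnit g 1) =
      ∑ l ∈ compositions μ, (-1 : R) ^ l.length * (l.map fun a => coeff a g).prod := by
  set N : MvPowerSeries σ R := fun ν =>
    ∑ l ∈ compositions ν, (-1 : R) ^ l.length * (l.map fun a => coeff a g).prod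
  suffices g * N = 1 by rw [invOfUnit_one_eq_of_mul_eq_one hg this]; rfl
  ext ν
  have hg0 : coeff 0 g = 1 := by rw [coeff_zero_eq_constantCoeff_apply, hg]
  rw [coeff_mul, coeff_one]
  split_ifs with hν
  · subst hν
    rw [Finsupp.antidiagonal_zero, Finset.sum_singleton, hg0, one_mul]
    show ∑ l ∈ compositions 0, _ = _
    simp [compositions_zero]
  · have hN : coeff ν N = -∑ p ∈ Finset.HasAntidiagonal.antidiagonal ν with p.1 ≠ 0,
        coeff p.1 g * coeff p.2 N := by
      show ∑ l ∈ compositions ν, _ = _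
      rw [sum_compositions_eq_sum_antidiagonal hν, ← Finset.sum_neg_distrib]
      refine Finset.sum_congr rfl fun p _ => ?_
      show _ = -(_ * ∑ t ∈ compositions p.2, _)
      rw [Finset.mul_sum, ← Finset.sum_neg_distrib]
      refine Finset.sum_congr rfl fun t _ => ?_
      rw [List.length_cons, List.map_cons, List.prod_cons, pow_succ]
      ring
    have hfirst : ∑ p ∈ Finset.HasAntidiagonal.antidiagonal ν with ¬p.1 ≠ 0,
        coeff p.1 g * coeff p.2 N = coeff ν N := by
      rw [Finset.sum_eq_single_of_mem (0, ν) (by simp)]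
      · rw [hg0, one_mul]
      · intro p hp hne
        simp only [not_not, Finset.mem_filter, Finset.HasAntidiagonal.mem_antidiagonal] at hp
        exact absurd (Prod.ext hp.2 (by rw [← hp.1, hp.2, zero_add])) hne
    rw [← Finset.sum_filter_add_sum_filter_not _ (fun p => p.1 ≠ 0), hfirst, hN,
      add_neg_cancel]

lemma coeff_eulerLogDeriv_eq_neg_sum_compositions {g : MvPowerSeries σ R}
    (hg : constantCoeff g = 1) {μ : σ →₀ ℕ} (hμ : μ ≠ 0) :
    coeff μ (eulerLogDeriv g) = -∑ l ∈ compositions μ,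
      (-1 : R) ^ l.length * (htv l.headI : R) * (l.map fun a => coeff a g).prod := by
  rw [sum_compositions_eq_sum_antidiagonal hμ, ← Finset.sum_neg_distrib, eulerLogDeriv, coeff_mul,
    ← Finset.sum_filter_of_ne (p := fun p => p.1 ≠ 0) fun p _ hp h0 => hp (by
      rw [coeff_eulerDeriv, h0, htv_zero, Nat.cast_zero, zero_mul, zero_mul])]
  refine Finset.sum_congr rfl fun p _ => ?_
  rw [coeff_eulerDeriv, coeff_invOfUnit_one_eq_sum_compositions hg, Finset.mul_sum,
    ← Finset.sum_neg_distrib]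
  refine Finset.sum_congr rfl fun t _ => ?_
  rw [List.length_cons, List.headI_cons, List.map_cons, List.prod_cons, pow_succ]
  ring

end InverseByCompositions

section DivisorSum

variable {σ R ι : Type*} [CommRing R]

lemma finsum_eq_neg_coeff_eulerLogDeriv_prod (s : (σ →₀ ℕ) → Finset ι)
    (c : (σ →₀ ℕ) → ι → R) (e : (σ →₀ ℕ) → ι → ℤ) {d : σ →₀ ℕ} {S : Finset (σ →₀ ℕ)}
    (hS : ∀ a, a ∈ S ↔ a ≠ 0 ∧ a ≤ d) :
    ∑ᶠ p ∈ {p : ℕ × (σ →₀ ℕ) | 0 < p.1 ∧ p.2 ≠ 0 ∧ d = p.1 • p.2},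
        (htv p.2 : R) * ∑ i ∈ s p.2, e p.2 i • c p.2 i ^ p.1 =
      -coeff d (eulerLogDeriv
        (∏ a ∈ S, ∏ i ∈ s a, zpowSeries (1 - monomial a (c a i)) (e a i))) := by
  classical
  rw [eulerLogDeriv_prod S fun a ha =>
      constantCoeff_prod_zpowSeries_one_sub_monomial _ _ _ ((hS a).1 ha).1,
    map_sum, ← Finset.sum_neg_distrib,
    ← Finset.sum_filter_of_ne (p := fun a => ∃ k, 0 < k ∧ d = k • a) ?_,
    ← finsum_mem_coe_finset]
  · refine finsum_mem_eq_of_bijOn Prod.snd ⟨?_, ?_, ?_⟩ fun p hp => ?_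
    · rintro ⟨k, a⟩ ⟨hk, ha, hd⟩
      rw [Finset.coe_filter, Set.mem_ofPred_eq, hS]
      exact ⟨⟨ha, hd ▸ le_self_nsmul zero_le hk.ne'⟩, k, hk, hd⟩
    · rintro ⟨k, a⟩ ⟨-, ha, hd⟩ ⟨k', a'⟩ ⟨-, -, hd'⟩ (rfl : a = a')
      exact Prod.ext (nsmul_left_injective_of_ne_zero ha (hd.symm.trans hd')) rfl
    · intro a ha
      rw [Finset.coe_filter, Set.mem_ofPred_eq, hS] at ha
      obtain ⟨⟨ha, -⟩, k, hk, hd⟩ := ha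
      exact ⟨(k, a), ⟨hk, ha, hd⟩, rfl⟩
    · obtain ⟨hk, ha, hd⟩ := hp
      rw [hd, coeff_nsmul_eulerLogDeriv_prod_zpowSeries _ _ _ ha hk, neg_neg]
  · intro a ha hne
    contrapose! hne
    rw [coeff_eulerLogDeriv_prod_zpowSeries_eq_zero _ _ _ ((hS a).1 ha).1 hne, neg_zero]

end DivisorSum

open Classical in
theorem stmt_9_general (σ : Type*)
    (f : MvPowerSeries σ (Polynomial ℤ))
    (m : (σ →₀ ℕ) → (ℕ →₀ ℤ))
    (hm : ∀ d : σ →₀ ℕ, MvPowerSeries.coeff (R := Polynomial ℤ) d f =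
      MvPowerSeries.coeff (R := Polynomial ℤ) d
        (∏ lam ∈ (Finset.Iic d).erase 0, ∏ n ∈ (m lam).support,
          zpowSeries (1 - MvPowerSeries.monomial (R := Polynomial ℤ) lam (Polynomial.X ^ n))
            (m lam n))) :
    ∀ d : σ →₀ ℕ, d ≠ 0 →
      (∑ᶠ p ∈ {p : ℕ × (σ →₀ ℕ) | 0 < p.1 ∧ p.2 ≠ 0 ∧ d = p.1 • p.2},
        (htv p.2 : Polynomial ℤ) *
          ((m p.2).sum fun n c => c • (Polynomial.X : Polynomial ℤ) ^ (p.1 * n))) =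
      ∑ᶠ l ∈ {l : List (σ →₀ ℕ) | l ≠ [] ∧ (∀ x ∈ l, x ≠ 0) ∧ l.sum = d},
        (-1 : Polynomial ℤ) ^ l.length * (htv l.headI : Polynomial ℤ) *
          (l.map fun lam => MvPowerSeries.coeff (R := Polynomial ℤ) lam f).prod := by
  intro d hd
  have hIic (μ a : σ →₀ ℕ) : a ∈ (Finset.Iic μ).erase 0 ↔ a ≠ 0 ∧ a ≤ μ := by simp
  set g : MvPowerSeries σ (Polynomial ℤ) := ∏ a ∈ (Finset.Iic d).erase 0, ∏ n ∈ (m a).support,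
    zpowSeries (1 - monomial a (Polynomial.X ^ n)) (m a n)
  have hg : constantCoeff g = 1 := by
    rw [map_prod]
    exact Finset.prod_eq_one fun a ha =>
      constantCoeff_prod_zpowSeries_one_sub_monomial _ _ _ ((hIic d a).1 ha).1
  have hfg : ∀ μ ≤ d, coeff μ f = coeff μ g := fun μ hμ =>
    (hm μ).trans (coeff_prod_Iic_erase_zero_of_le hμ _ _ _).symm
  calc _ = -coeff d (eulerLogDeriv g) := by
        rw [← finsum_eq_neg_coeff_eulerLogDeriv_prod (fun a => (m a).support)
          (fun _ n => Polynomial.X ^ n) (fun a n => m a n) (hIic d)]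
        refine finsum_mem_congr rfl fun p _ => ?_
        simp only [Finsupp.sum, mul_comm p.1, pow_mul]
    _ = ∑ l ∈ compositions d, (-1) ^ l.length * (htv l.headI : Polynomial ℤ) *
          (l.map fun a => coeff a g).prod := by
        rw [coeff_eulerLogDeriv_eq_neg_sum_compositions hg hd, neg_neg]
    _ = _ := by
        rw [setOf_ne_nil_eq_compositions hd, finsum_mem_coe_finset]
        refine Finset.sum_congr rfl fun l hl => ?_
        rw [List.map_congr_left fun a ha =>
          hfg a ((mem_compositions.1 hl).2 ▸ List.le_sum_of_mem ha)]

open Classical in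
/-- **Coefficient comparison of the two expressions for `D(Σ)/Σ`** (proof of Theorem 5.1,
just before Möbius inversion): if `f ∈ MvPowerSeries σ ℤ[t]` has constant coefficient `1`
and product-form exponent family `m`, and `P_λ` denotes the coefficient of `X^λ` in `f`,
then for every nonzero `d`:
`∑_{(k,κ) : d = k·κ} ht(κ)·∑_n m(κ,n) t^{kn} = ∑ (-1)^r · ht(λ₁) · ∏ᵢ P_{λᵢ}`,
the right sum running over nonempty lists `(λ₁,…,λ_r)` of nonzero exponent vectors
summing to `d`. -/
theorem stmt_9 (σ : Type*) [Fintype σ]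
    (f : MvPowerSeries σ (Polynomial ℤ))
    (hf : MvPowerSeries.constantCoeff (σ := σ) (R := Polynomial ℤ) f = 1)
    (m : (σ →₀ ℕ) → (ℕ →₀ ℤ)) (hm0 : m 0 = 0)
    (hm : ∀ d : σ →₀ ℕ, MvPowerSeries.coeff (R := Polynomial ℤ) d f =
      MvPowerSeries.coeff (R := Polynomial ℤ) d
        (∏ lam ∈ (Finset.Iic d).erase 0, ∏ n ∈ (m lam).support,
          zpowSeries (1 - MvPowerSeries.monomial (R := Polynomial ℤ) lam (Polynomial.X ^ n))
            (m lam n))) :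
    ∀ d : σ →₀ ℕ, d ≠ 0 →
      (∑ᶠ p ∈ {p : ℕ × (σ →₀ ℕ) | 0 < p.1 ∧ p.2 ≠ 0 ∧ d = p.1 • p.2},
        (htv p.2 : Polynomial ℤ) *
          ((m p.2).sum fun n c => c • (Polynomial.X : Polynomial ℤ) ^ (p.1 * n))) =
      ∑ᶠ l ∈ {l : List (σ →₀ ℕ) | l ≠ [] ∧ (∀ x ∈ l, x ≠ 0) ∧ l.sum = d},
        (-1 : Polynomial ℤ) ^ l.length * (htv l.headI : Polynomial ℤ) *
          (l.map fun lam => MvPowerSeries.coeff (R := Polynomial ℤ) lam f).prod :=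
  stmt_9_general σ f m hm
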